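/- (Proposition 1) In the M-RA construction, the M-RA covariance C_M is a valid (nonnegative definite) covariance function: C_M(s,t) = C_M(t,s) for all s,t ∈ D, and for every finite collection of points s₁,…,sₙ ∈ D and reals c₁,…,cₙ one has ∑_{i,j} cᵢ cⱼ C_M(sᵢ,sⱼ) ≥ 0. -/

import Mathlib

/-!
Each level's contribution `bₘ(s)ᵀ K bₘ(t)`, on a region, is the Gram kernel of the vectors
`bₘ(s)` in the inner product given by the positive definite `K`. The residual
`vₘ(s,t) − bₘ(s)ᵀ K bₘ(t)` on a region is the Schur complement of the knot Gram matrix in the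
joint Gram matrix of knots and sample points, so by induction on `m` every `vₘ` is positive
semidefinite. Zeroing a positive semidefinite kernel across the blocks of a partition keeps it
positive semidefinite, and so does summing.
-/

open Matrix

section PosSemidefKernel

variable {D : Type*}

def kernelMatrix {ι κ : Type*} (k : D → D → ℝ) (s : ι → D) (t : κ → D) : Matrix ι κ ℝ :=
  of fun a b => k (s a) (t b)

def IsPosSemidefKernel (k : D → D → ℝ) : Prop :=
  ∀ (ι : Type) [Fintype ι] (s : ι → D), (kernelMatrix k s s).PosSemidef

/-- The paper's `b(s)ᵀ K b(t)`: the covariance kernel of the best linear predictor of a process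
with covariance `k` from its values at the knots `q`. -/
noncomputable def nystromKernel {κ : Type*} [Fintype κ] [DecidableEq κ] (k : D → D → ℝ)
    (q : κ → D) : D → D → ℝ :=
  fun s t => (fun j => k s (q j)) ⬝ᵥ (kernelMatrix k q q)⁻¹ *ᵥ (fun j => k t (q j))

def blockKernel {J : Type*} [DecidableEq J] (π : D → J) (k : J → D → D → ℝ) : D → D → ℝ :=
  fun s t => if π s = π t then k (π s) s t else 0

lemma dotProduct_kernelMatrix_mulVec {ι : Type*} [Fintype ι] (k : D → D → ℝ) (s : ι → D)
    (c : ι → ℝ) : c ⬝ᵥ kernelMatrix k s s *ᵥ c = ∑ a, ∑ b, c a * c b * k (s a) (s b) := by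
  simp only [dotProduct, mulVec, kernelMatrix, of_apply, Finset.mul_sum]
  exact Finset.sum_congr rfl fun a _ => Finset.sum_congr rfl fun b _ => by ring

lemma kernelMatrix_nystromKernel {ι κ : Type*} [Fintype κ] [DecidableEq κ]
    (k : D → D → ℝ) (q : κ → D) (s : ι → D) :
    kernelMatrix (nystromKernel k q) s s =
      kernelMatrix k s q * (kernelMatrix k q q)⁻¹ * (kernelMatrix k s q)ᴴ := by
  ext a b
  simp only [kernelMatrix, nystromKernel, mul_apply, conjTranspose_apply, of_apply, star_trivial,
    dotProduct, mulVec, Finset.mul_sum, Finset.sum_mul]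
  rw [Finset.sum_comm]
  exact Finset.sum_congr rfl fun _ _ => Finset.sum_congr rfl fun _ _ => by ring

namespace IsPosSemidefKernel

variable {k : D → D → ℝ}

lemma of_symm_of_sum_nonneg (hsymm : ∀ s t, k s t = k t s)
    (hnonneg : ∀ (n : ℕ) (s : Fin n → D) (c : Fin n → ℝ),
      0 ≤ ∑ i, ∑ j, c i * c j * k (s i) (s j)) :
    IsPosSemidefKernel k := by
  intro ι _ s
  rw [← posSemidef_submatrix_equiv (Fintype.equivFin ι).symm]
  refine .of_dotProduct_mulVec_nonneg (Matrix.ext fun a b => hsymm _ _) fun c => ?_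
  rw [star_trivial]
  exact (dotProduct_kernelMatrix_mulVec k _ c).symm ▸ hnonneg _ _ c

lemma symm (hk : IsPosSemidefKernel k) (s t : D) : k s t = k t s := by
  simpa [kernelMatrix] using ((hk (Fin 2) ![s, t]).isHermitian.apply 0 1).symm

lemma quadraticForm_nonneg (hk : IsPosSemidefKernel k) {ι : Type} [Fintype ι] (s : ι → D)
    (c : ι → ℝ) : 0 ≤ ∑ a, ∑ b, c a * c b * k (s a) (s b) := by
  simpa [dotProduct_kernelMatrix_mulVec] using (hk ι s).dotProduct_mulVec_nonneg c

lemma add {l : D → D → ℝ} (hk : IsPosSemidefKernel k) (hl : IsPosSemidefKernel l) :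
    IsPosSemidefKernel fun s t => k s t + l s t :=
  fun ι _ s => (hk ι s).add (hl ι s)

lemma sum {α : Type*} (A : Finset α) {k : α → D → D → ℝ}
    (hk : ∀ i ∈ A, IsPosSemidefKernel (k i)) :
    IsPosSemidefKernel fun s t => ∑ i ∈ A, k i s t := by
  intro ι _ s
  have hsum : kernelMatrix (fun s t => ∑ i ∈ A, k i s t) s s =
      ∑ i ∈ A, kernelMatrix (k i) s s := by
    ext a b
    simp [kernelMatrix, Matrix.sum_apply]
  rw [hsum]
  exact posSemidef_sum A fun i hi => hk i hi ι s

/-- The Gram matrix is the sum of the compressions `P A P` of the fiberwise Gram matrices `A` by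
the diagonal projections `P` onto the fibers of `π`. -/
lemma blockKernel {J : Type*} [DecidableEq J] (π : D → J) {k : J → D → D → ℝ}
    (hk : ∀ j, IsPosSemidefKernel (k j)) : IsPosSemidefKernel (_root_.blockKernel π k) := by
  classical
  intro ι _ s
  let P : J → Matrix ι ι ℝ := fun j => diagonal fun a => if π (s a) = j then 1 else 0
  have hblocks : kernelMatrix (_root_.blockKernel π k) s s =
      ∑ j ∈ Finset.univ.image (π ∘ s), P j * kernelMatrix (k j) s s * (P j)ᴴ := by
    ext a b
    by_cases h : π (s a) = π (s b) <;>
      simp [P, kernelMatrix, _root_.blockKernel, Matrix.sum_apply, diagonal_mul, mul_diagonal, h]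
  rw [hblocks]
  exact posSemidef_sum _ fun j _ => (hk j ι s).mul_mul_conjTranspose_same (P j)

lemma nystromKernel (hk : IsPosSemidefKernel k) {κ : Type} [Fintype κ] [DecidableEq κ]
    (q : κ → D) : IsPosSemidefKernel (nystromKernel k q) := by
  intro ι _ s
  rw [kernelMatrix_nystromKernel]
  exact (hk κ q).inv.mul_mul_conjTranspose_same _

/-- The residual is the Schur complement of the knot block in the Gram matrix of the knots
together with the sample points. -/
lemma sub_nystromKernel (hk : IsPosSemidefKernel k) {κ : Type} [Fintype κ] [DecidableEq κ]
    {q : κ → D} (hq : (kernelMatrix k q q).PosDef) :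
    IsPosSemidefKernel fun s t => k s t - _root_.nystromKernel k q s t := by
  intro ι _ s
  let := hq.isUnit.invertible
  have hjoint : fromBlocks (kernelMatrix k q q) (kernelMatrix k s q)ᴴ (kernelMatrix k s q)ᴴᴴ
      (kernelMatrix k s s) = kernelMatrix k (Sum.elim q s) (Sum.elim q s) := by
    ext (j | a) (l | b) <;>
      simp only [kernelMatrix, conjTranspose_eq_transpose_of_trivial, transpose_transpose,
        fromBlocks_apply₁₁, fromBlocks_apply₁₂, fromBlocks_apply₂₁, fromBlocks_apply₂₂,
        transpose_apply, of_apply, Sum.elim_inl, Sum.elim_inr]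
    exact hk.symm _ _
  have hschur := (PosDef.fromBlocks₁₁ _ (kernelMatrix k s s) hq).mp
    (hjoint ▸ hk (κ ⊕ ι) (Sum.elim q s))
  rwa [conjTranspose_conjTranspose, ← kernelMatrix_nystromKernel] at hschur

/-- One step `vₘ ↦ vₘ₊₁` of the recursion, with `π = pₘ`, `π' = pₘ₊₁` and `q = Qₘ`. -/
lemma ite_sub_nystromKernel (hk : IsPosSemidefKernel k) {J J' : Type*} [DecidableEq J']
    {κ : Type} [Fintype κ] [DecidableEq κ] {π : D → J} {π' : D → J'}
    (hπ : ∃ f : J' → J, ∀ s, π s = f (π' s))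
    {q : J → κ → D} (hq : ∀ i, (kernelMatrix k (q i) (q i)).PosDef) :
    IsPosSemidefKernel fun s t =>
      if π' s = π' t then k s t - _root_.nystromKernel k (q (π s)) s t else 0 := by
  obtain ⟨f, hf⟩ := hπ
  obtain rfl : π = fun s => f (π' s) := funext hf
  exact .blockKernel π' fun j => hk.sub_nystromKernel (hq (f j))

end IsPosSemidefKernel

end PosSemidefKernel

theorem MRA_covariance_posSemidef_general
    {D : Type*} {I : ℕ → Type*} [∀ m, DecidableEq (I m)]
    (C₀ : D → D → ℝ)
    (hC₀symm : ∀ s t, C₀ s t = C₀ t s)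
    (hC₀psd : ∀ (n : ℕ) (s : Fin n → D) (c : Fin n → ℝ),
      0 ≤ ∑ i, ∑ j, c i * c j * C₀ (s i) (s j))
    (M r : ℕ)
    (p : ∀ m : ℕ, D → I m)
    (hnested : ∀ m < M, ∃ f : I (m + 1) → I m, ∀ s, p m s = f (p (m + 1) s))
    (Q : ∀ m : ℕ, I m → Fin r → D)
    (v : ℕ → D → D → ℝ)
    (hv0 : ∀ s t, v 0 s t = C₀ s t)
    (b : ℕ → D → Fin r → ℝ)
    (hb : ∀ m < M, ∀ (s : D) (k : Fin r), b m s k = v m s (Q m (p m s) k))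
    (G : ∀ m : ℕ, I m → Matrix (Fin r) (Fin r) ℝ)
    (hG : ∀ m < M, ∀ (i : I m) (k l : Fin r), G m i k l = v m (Q m i k) (Q m i l))
    (hGpd : ∀ m < M, ∀ i : I m, (G m i).PosDef)
    (K : ∀ m : ℕ, I m → Matrix (Fin r) (Fin r) ℝ)
    (hK : ∀ m < M, ∀ i : I m, K m i = (G m i)⁻¹)
    (hvrec : ∀ m < M, ∀ s t : D, p (m + 1) s = p (m + 1) t →
      v (m + 1) s t = v m s t - b m s ⬝ᵥ (K m (p m s)).mulVec (b m t))
    (hvzero : ∀ m < M, ∀ s t : D, p (m + 1) s ≠ p (m + 1) t →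
      v (m + 1) s t = 0)
    (CM : D → D → ℝ)
    (hCM : ∀ s t : D, CM s t =
      (∑ m ∈ Finset.range M,
        if p m s = p m t then b m s ⬝ᵥ (K m (p m s)).mulVec (b m t) else 0)
      + v M s t) :
    (∀ s t, CM s t = CM t s) ∧
    (∀ (n : ℕ) (s : Fin n → D) (c : Fin n → ℝ),
      0 ≤ ∑ i, ∑ j, c i * c j * CM (s i) (s j)) := by
  have hGker : ∀ m < M, ∀ i, G m i = kernelMatrix (v m) (Q m i) (Q m i) :=
    fun m hm i => Matrix.ext (hG m hm i)
  have hbKb : ∀ m < M, ∀ s t, p m s = p m t →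
      b m s ⬝ᵥ K m (p m s) *ᵥ b m t = nystromKernel (v m) (Q m (p m s)) s t := by
    intro m hm s t hst
    rw [funext (hb m hm s), funext (hb m hm t), ← hst, hK m hm, hGker m hm]
    rfl
  have hv : ∀ m ≤ M, IsPosSemidefKernel (v m) := by
    intro m
    induction m with
    | zero => exact fun _ => funext₂ hv0 ▸ .of_symm_of_sum_nonneg hC₀symm hC₀psd
    | succ m ih =>
      intro (hm : m < M)
      obtain ⟨f, hf⟩ := hnested m hm
      have hvsucc : v (m + 1) = fun s t => if p (m + 1) s = p (m + 1) t
          then v m s t - nystromKernel (v m) (Q m (p m s)) s t else 0 := by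
        funext s t
        split_ifs with h
        · rw [hvrec m hm s t h, hbKb m hm s t (by rw [hf, hf t, h])]
        · exact hvzero m hm s t h
      rw [hvsucc]
      exact (ih hm.le).ite_sub_nystromKernel ⟨f, hf⟩ fun i => hGker m hm i ▸ hGpd m hm i
  have hCMblocks : CM = fun s t => (∑ m ∈ Finset.range M,
      blockKernel (p m) (fun i => nystromKernel (v m) (Q m i)) s t) + v M s t := by
    funext s t
    rw [hCM s t]
    congr 1
    exact Finset.sum_congr rfl fun m hm =>
      if_ctx_congr Iff.rfl (hbKb m (Finset.mem_range.mp hm) s t) fun _ => rfl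
  have hCMpsd : IsPosSemidefKernel CM := hCMblocks ▸ (IsPosSemidefKernel.sum _ fun m hm =>
    .blockKernel _ fun i => (hv m (Finset.mem_range.mp hm).le).nystromKernel _).add (hv M le_rfl)
  exact ⟨hCMpsd.symm, fun _ s c => hCMpsd.quadraticForm_nonneg s c⟩

/-- Proposition 1: The M-RA covariance `C_M` is a valid
(nonnegative definite) covariance function. -/
theorem MRA_covariance_posSemidef
    {D : Type*} {I : ℕ → Type*} [∀ m, DecidableEq (I m)]
    (C₀ : D → D → ℝ)
    (hC₀symm : ∀ s t, C₀ s t = C₀ t s)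
    (hC₀psd : ∀ (n : ℕ) (s : Fin n → D) (c : Fin n → ℝ),
      0 ≤ ∑ i, ∑ j, c i * c j * C₀ (s i) (s j))
    (M r : ℕ) (hM : 1 ≤ M) (hr : 1 ≤ r)
    (p : ∀ m : ℕ, D → I m)
    (hp0 : ∀ s t, p 0 s = p 0 t)
    (hnested : ∀ m < M, ∃ f : I (m + 1) → I m, ∀ s, p m s = f (p (m + 1) s))
    (Q : ∀ m : ℕ, I m → Fin r → D)
    (hQ : ∀ m < M, ∀ (i : I m) (k : Fin r), p m (Q m i k) = i)
    (v : ℕ → D → D → ℝ)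
    (hv0 : ∀ s t, v 0 s t = C₀ s t)
    (b : ℕ → D → Fin r → ℝ)
    (hb : ∀ m < M, ∀ (s : D) (k : Fin r), b m s k = v m s (Q m (p m s) k))
    (G : ∀ m : ℕ, I m → Matrix (Fin r) (Fin r) ℝ)
    (hG : ∀ m < M, ∀ (i : I m) (k l : Fin r), G m i k l = v m (Q m i k) (Q m i l))
    (hGpd : ∀ m < M, ∀ i : I m, (G m i).PosDef)
    (K : ∀ m : ℕ, I m → Matrix (Fin r) (Fin r) ℝ)
    (hK : ∀ m < M, ∀ i : I m, K m i = (G m i)⁻¹)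
    (hvrec : ∀ m < M, ∀ s t : D, p (m + 1) s = p (m + 1) t →
      v (m + 1) s t = v m s t - b m s ⬝ᵥ (K m (p m s)).mulVec (b m t))
    (hvzero : ∀ m < M, ∀ s t : D, p (m + 1) s ≠ p (m + 1) t →
      v (m + 1) s t = 0)
    (CM : D → D → ℝ)
    (hCM : ∀ s t : D, CM s t =
      (∑ m ∈ Finset.range M,
        if p m s = p m t then b m s ⬝ᵥ (K m (p m s)).mulVec (b m t) else 0)
      + v M s t) :
    (∀ s t, CM s t = CM t s) ∧
    (∀ (n : ℕ) (s : Fin n → D) (c : Fin n → ℝ),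
      0 ≤ ∑ i, ∑ j, c i * c j * CM (s i) (s j)) :=
  MRA_covariance_posSemidef_general C₀ hC₀symm hC₀psd M r p hnested Q v hv0 b hb G hG hGpd K hK
    hvrec hvzero CM hCM
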